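/- The Jacobi integral E(v¹,...,v⁶) = (v¹)² + (v³)² + 2(1-μ)v⁵ + 2μv⁶ - ((v²)² + (v⁴)²) is constant along solutions of the polynomial CRTBP vector field g: if v(t) solves v̇ = g(v), then d/dt E(v(t)) = 0. -/
import Mathlib


/-- The polynomial CRTBP vector field obtained by automatic differentiation. -/
def crtbpPoly (μ : ℝ) (v : Fin 6 → ℝ) : Fin 6 → ℝ :=
  ![v 1,
    2 * v 3 + v 0 - (1 - μ) * (v 0 + μ) * (v 4) ^ 3 - μ * (v 5) ^ 3 * (v 0 - 1 + μ),
    v 3,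
    -2 * v 1 + v 2 - (1 - μ) * v 2 * (v 4) ^ 3 - μ * v 2 * (v 5) ^ 3,
    -(v 4) ^ 3 * ((v 0 + μ) * v 1 + v 2 * v 3),
    -(v 5) ^ 3 * ((v 0 - 1 + μ) * v 1 + v 2 * v 3)]

/-- The Jacobi integral in the transformed variables. -/
def jacobiE (μ : ℝ) (v : Fin 6 → ℝ) : ℝ :=
  (v 0) ^ 2 + (v 2) ^ 2 + 2 * (1 - μ) * v 4 + 2 * μ * v 5 - ((v 1) ^ 2 + (v 3) ^ 2)

/-- The Jacobi integral is constant along solutions of the polynomial CRTBP field: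
if `v̇ = g(v)` then `d/dt E(v(t)) = 0`. -/
theorem jacobi_integral_conserved
    (μ : ℝ) (hμ : μ ∈ Set.Ioo (0 : ℝ) 1)
    (v : ℝ → (Fin 6 → ℝ))
    (hv : ∀ t : ℝ, ∀ i : Fin 6, HasDerivAt (fun s => v s i) (crtbpPoly μ (v t) i) t) :
    ∀ t : ℝ, HasDerivAt (fun s => jacobiE μ (v s)) 0 t := by
  intro t
  have h0 := hv t 0; have h1 := hv t 1; have h2 := hv t 2
  have h3 := hv t 3; have h4 := hv t 4; have h5 := hv t 5
  simp only [crtbpPoly, Matrix.cons_val_zero, Matrix.cons_val_one, Matrix.head_cons,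
    Matrix.cons_val_fin_one] at h0 h1 h2 h3 h4 h5
  have H : HasDerivAt (fun s => jacobiE μ (v s))
      (2 * v t 0 ^ 1 * (v t 1) + 2 * v t 2 ^ 1 * (v t 3)
        + 2 * (1 - μ) * (-(v t 4) ^ 3 * ((v t 0 + μ) * v t 1 + v t 2 * v t 3))
        + 2 * μ * (-(v t 5) ^ 3 * ((v t 0 - 1 + μ) * v t 1 + v t 2 * v t 3))
        - (2 * v t 1 ^ 1 * (2 * v t 3 + v t 0 - (1 - μ) * (v t 0 + μ) * (v t 4) ^ 3 - μ * (v t 5) ^ 3 * (v t 0 - 1 + μ))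
          + 2 * v t 3 ^ 1 * (-2 * v t 1 + v t 2 - (1 - μ) * v t 2 * (v t 4) ^ 3 - μ * v t 2 * (v t 5) ^ 3))) t := by
    unfold jacobiE
    exact ((((h0.pow 2).add (h2.pow 2)).add ((h4.const_mul _))).add (h5.const_mul _)).sub
      ((h1.pow 2).add (h3.pow 2))
  convert H using 1
  ring
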